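/- arXiv:2303.04453 — 2 statements merged into one kernel-verified Lean document; each statement's English description precedes it below -/
import Mathlib

section
/- Let 𝒳 be a hereditary class of finite simple graphs in which the h-index is unbounded, i.e., for every k there is a graph G ∈ 𝒳 with h(G) ≥ k. Then 𝒳 contains every complete graph Kₙ, or 𝒳 contains every complete bipartite graph K_{n,n}, or 𝒳 contains every star forest nK_{1,n} (the disjoint union of n copies of the star K_{1,n}). Conversely, the class of complete graphs, the class of complete bipartite graphs, and the class of star forests each have unbounded h-index; hence these are the only three minimal hereditary classes of graphs of unbounded h-index. -/
open SimpleGraph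

/-- A class of finite simple graphs, given by its members on the concrete
vertex sets `Fin n`. -/
abbrev GraphClass : Type := ∀ n : ℕ, SimpleGraph (Fin n) → Prop

/-- A class is hereditary if it is closed under induced subgraphs
(and hence under isomorphism). -/
def Hereditary (C : GraphClass) : Prop :=
  ∀ {n m : ℕ} (G : SimpleGraph (Fin n)) (H : SimpleGraph (Fin m)),
    C n G → Nonempty (H ↪g G) → C m H

/-- The star forest `nK_{1,n}`: `n` disjoint stars `K_{1,n}`, the `i`-th star having
center `(i, 0)` and leaves `(i, j)` for `j ≠ 0`. -/
def starForest (n : ℕ) : SimpleGraph (Fin n × Fin (n + 1)) :=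
  SimpleGraph.fromRel fun a b => a.1 = b.1 ∧ a.2 = 0 ∧ b.2 ≠ 0

/-- `G` has h-index at least `k`: it has at least `k` vertices of degree at least `k`. -/
def HIndexAtLeast {V : Type*} (G : SimpleGraph V) (k : ℕ) : Prop :=
  k ≤ {v : V | k ≤ (G.neighborSet v).ncard}.ncard

/-!
Let `G` have `K` vertices of degree at least `K`, `K` huge, and no `n`-clique. By Ramsey the
vertices of high degree contain a large independent set `T`. Call two vertices heavy if they have
many common neighbours. If some `c ∈ T` has many heavy partners in `T`, recurse with those partners
inside the neighbourhood of `c`; otherwise a greedy choice gives `n` pairwise light vertices of `T`,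
each of which keeps many private neighbours. Iterating, either many vertices of `T` share a large
common neighbourhood, which Ramsey turns into an induced `K_{n,n}`, or there are `n` independent
centres with large private neighbourhoods. Ramsey makes each private neighbourhood independent, and
bipartite Ramsey, applied to one pair of neighbourhoods at a time, removes all edges between
different ones unless it finds a large biclique (again an induced `K_{n,n}`); what is left is an
induced `nK_{1,n}`. Each of the three families embeds into its larger members, so a hereditary
class meeting one of the families in every size contains one of them entirely.
-/

open Finset

theorem Finset.exists_embedding_fin_of_le_card {V : Type*} {s : Finset V} {n : ℕ}
    (h : n ≤ #s) : ∃ f : Fin n ↪ V, ∀ i, f i ∈ s := by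
  obtain ⟨e⟩ := Function.Embedding.nonempty_of_card_le (α := Fin n) (β := s) (by simpa using h)
  exact ⟨e.trans (Function.Embedding.subtype _), fun i => (e i).2⟩

namespace SimpleGraph

variable {V : Type*} {G : SimpleGraph V}

variable (G) in
def IsAnticompleteBetween (s t : Set V) : Prop :=
  ∀ ⦃a⦄, a ∈ s → ∀ ⦃b⦄, b ∈ t → ¬ G.Adj a b

theorem IsAnticompleteBetween.mono {s t s' t' : Set V} (h : G.IsAnticompleteBetween s t)
    (hs : s' ⊆ s) (ht : t' ⊆ t) : G.IsAnticompleteBetween s' t' :=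
  fun _ ha _ hb => h (hs ha) (ht hb)

theorem IsCompleteBetween.mono {s t s' t' : Set V} (h : G.IsCompleteBetween s t)
    (hs : s' ⊆ s) (ht : t' ⊆ t) : G.IsCompleteBetween s' t' :=
  fun _ ha _ hb => h (hs ha) (ht hb)

theorem IsIndepSet.not_adj {s : Set V} (h : G.IsIndepSet s) {a b : V} (ha : a ∈ s) (hb : b ∈ s) :
    ¬ G.Adj a b := fun hab => h ha hb (G.ne_of_adj hab) hab

theorem isIndepSet_insert {a : V} {s : Set V} :
    G.IsIndepSet (insert a s) ↔ G.IsIndepSet s ∧ ∀ b ∈ s, a ≠ b → ¬ G.Adj a b := by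
  rw [← isClique_compl, isClique_insert, isClique_compl]
  simp +contextual [compl_adj]

theorem completeBipartiteGraph_isContained_of_isCompleteBetween {t : ℕ} {A B : Finset V}
    (hAB : G.IsCompleteBetween A B) (hA : t ≤ #A) (hB : t ≤ #B) :
    completeBipartiteGraph (Fin t) (Fin t) ⊑ G := by
  obtain ⟨A', hA'A, hA'⟩ := exists_subset_card_eq hA
  obtain ⟨B', hB'B, hB'⟩ := exists_subset_card_eq hB
  exact completeBipartiteGraph_isContained_iff.mpr ⟨A', B', by simpa using hA', by simpa using hB',
    hAB.mono (by simpa using hA'A) (by simpa using hB'B)⟩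

theorem completeBipartiteGraph_isContained_of_le {s t : ℕ} (hst : s ≤ t)
    (h : completeBipartiteGraph (Fin t) (Fin t) ⊑ G) :
    completeBipartiteGraph (Fin s) (Fin s) ⊑ G := by
  obtain ⟨A, B, hA, hB, hAB⟩ := completeBipartiteGraph_isContained_iff.mp h
  exact completeBipartiteGraph_isContained_of_isCompleteBetween hAB
    (by simpa [hA] using hst) (by simpa [hB] using hst)

section Ramsey

variable [DecidableEq V]

variable (G) in
theorem exists_isClique_or_isIndepSet (s t : ℕ) (A : Finset V) (hA : (s + t).choose s ≤ #A) :
    (∃ B ⊆ A, s ≤ #B ∧ G.IsClique B) ∨ ∃ B ⊆ A, t ≤ #B ∧ G.IsIndepSet B := by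
  classical
  induction s generalizing t A with
  | zero => exact .inl ⟨∅, empty_subset A, le_rfl, by simp⟩
  | succ s ihs =>
    induction t generalizing A with
    | zero => exact .inr ⟨∅, empty_subset A, le_rfl, by simp⟩
    | succ t iht =>
      have hsplit : (s + 1 + (t + 1)).choose (s + 1) =
          (s + (t + 1)).choose s + (s + 1 + t).choose (s + 1) := by
        rw [show s + 1 + (t + 1) = s + (t + 1) + 1 by omega, Nat.choose_succ_succ,
          show s + (t + 1) = s + 1 + t by omega]
      obtain ⟨v, hv⟩ : A.Nonempty := card_pos.mp <| (Nat.choose_pos (by omega)).trans_le hA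
      set N := {x ∈ A.erase v | G.Adj v x}
      set M := {x ∈ A.erase v | ¬ G.Adj v x}
      have hNM : #N + #M + 1 = #A := by
        rw [card_filter_add_card_filter_not, card_erase_add_one hv]
      have hvN : v ∉ N := fun h => by simp [N] at h
      have hvM : v ∉ M := fun h => by simp [M] at h
      have hNA : N ⊆ A := (filter_subset _ _).trans (erase_subset v A)
      have hMA : M ⊆ A := (filter_subset _ _).trans (erase_subset v A)
      rcases (by omega : (s + (t + 1)).choose s ≤ #N ∨ (s + 1 + t).choose (s + 1) ≤ #M)
        with hN | hM
      · rcases ihs (t + 1) N hN with ⟨B, hBN, hB, hBc⟩ | ⟨B, hBN, hB, hBi⟩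
        · refine .inl ⟨insert v B, insert_subset hv (hBN.trans hNA), ?_, ?_⟩
          · rw [card_insert_of_notMem fun h => hvN (hBN h)]; omega
          · rw [coe_insert, isClique_insert]
            exact ⟨hBc, fun b hb _ => (mem_filter.mp (hBN hb)).2⟩
        · exact .inr ⟨B, hBN.trans hNA, hB, hBi⟩
      · rcases iht M hM with ⟨B, hBM, hB, hBc⟩ | ⟨B, hBM, hB, hBi⟩
        · exact .inl ⟨B, hBM.trans hMA, hB, hBc⟩
        · refine .inr ⟨insert v B, insert_subset hv (hBM.trans hMA), ?_, ?_⟩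
          · rw [card_insert_of_notMem fun h => hvM (hBM h)]; omega
          · rw [coe_insert, isIndepSet_insert]
            exact ⟨hBi, fun b hb _ => (mem_filter.mp (hBM hb)).2⟩

theorem CliqueFree.exists_isIndepSet {s : ℕ} (hG : G.CliqueFree s) {t : ℕ} {A : Finset V}
    (hA : (s + t).choose s ≤ #A) : ∃ B ⊆ A, t ≤ #B ∧ G.IsIndepSet B := by
  refine (G.exists_isClique_or_isIndepSet s t A hA).resolve_left ?_
  rintro ⟨B, -, hB, hBc⟩
  obtain ⟨B', hB'B, hB'⟩ := exists_subset_card_eq hB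
  exact hG B' ⟨hBc.subset (by simpa using hB'B), hB'⟩

variable (G) in
theorem exists_isCompleteBetween_or_isAnticompleteBetween (t : ℕ) {A B : Finset V}
    (hA : 2 * t ≤ #A) (hB : 2 ^ (2 * t) * t ≤ #B) :
    ∃ A' ⊆ A, ∃ B' ⊆ B, t ≤ #A' ∧ t ≤ #B' ∧
      (G.IsCompleteBetween A' B' ∨ G.IsAnticompleteBetween A' B') := by
  classical
  obtain ⟨A₀, hA₀A, hA₀⟩ := exists_subset_card_eq hA
  -- Pigeonhole on the traces `N(b) ∩ A₀` of the vertices `b ∈ B`.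
  obtain ⟨P, hP, hPB⟩ := exists_le_card_fiber_of_mul_le_card_of_maps_to
    (s := B) (f := fun b => {a ∈ A₀ | G.Adj a b}) (t := A₀.powerset) (n := t)
    (fun b _ => mem_powerset.mpr (filter_subset _ _)) (powerset_nonempty A₀)
    (by rwa [card_powerset, hA₀])
  set B' := {b ∈ B | {a ∈ A₀ | G.Adj a b} = P}
  have hP' : P ⊆ A₀ := mem_powerset.mp hP
  have hmemP : ∀ b ∈ B', ∀ a ∈ A₀, a ∈ P ↔ G.Adj a b := fun b hb a ha => by
    rw [← (mem_filter.mp hb).2]; simp [ha]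
  rcases le_or_gt t #P with htP | htP
  · exact ⟨P, hP'.trans hA₀A, B', filter_subset _ _, htP, hPB,
      .inl fun a ha b hb => (hmemP b hb a (hP' ha)).mp ha⟩
  · refine ⟨A₀ \ P, sdiff_subset.trans hA₀A, B', filter_subset _ _, ?_, hPB,
      .inr fun a ha b hb hab => ?_⟩
    · rw [card_sdiff_of_subset hP']; omega
    · rw [coe_sdiff, Set.mem_sdiff] at ha
      exact ha.2 ((hmemP b hb a ha.1).mpr hab)

def bipartiteRamseyBound (t : ℕ) : ℕ := 2 ^ (2 * t) * t + 2 * t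

theorem le_bipartiteRamseyBound (t : ℕ) : t ≤ bipartiteRamseyBound t := by
  unfold bipartiteRamseyBound; omega

variable (G) in
theorem isContained_or_exists_isAnticompleteBetween {ι : Type*} [DecidableEq ι]
    (P : Finset (ι × ι)) (hP : ∀ p ∈ P, p.1 ≠ p.2) (t : ℕ) (L : ι → Finset V)
    (hL : ∀ i, bipartiteRamseyBound^[#P] t ≤ #(L i)) :
    completeBipartiteGraph (Fin t) (Fin t) ⊑ G ∨
      ∃ L' : ι → Finset V, (∀ i, L' i ⊆ L i ∧ t ≤ #(L' i)) ∧
        ∀ p ∈ P, G.IsAnticompleteBetween (L' p.1) (L' p.2) := by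
  induction P using Finset.induction_on generalizing t with
  | empty => exact .inr ⟨L, fun i => ⟨subset_rfl, hL i⟩, by simp⟩
  | @insert p P hpP ih =>
    simp only [card_insert_of_notMem hpP, Function.iterate_succ_apply] at hL
    rcases ih (fun q hq => hP q (mem_insert_of_mem hq)) _ hL with hK | ⟨L', hL', hPL'⟩
    · exact .inl (completeBipartiteGraph_isContained_of_le (le_bipartiteRamseyBound t) hK)
    have hb : ∀ i, 2 * t ≤ #(L' i) ∧ 2 ^ (2 * t) * t ≤ #(L' i) := fun i => by
      have := (hL' i).2; unfold bipartiteRamseyBound at this; omega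
    obtain ⟨A, hA, B, hB, hAt, hBt, hAB | hAB⟩ :=
      G.exists_isCompleteBetween_or_isAnticompleteBetween t (hb p.1).1 (hb p.2).2
    · exact .inl (completeBipartiteGraph_isContained_of_isCompleteBetween hAB hAt hBt)
    have hp : p.2 ≠ p.1 := (hP p (mem_insert_self p P)).symm
    set L'' : ι → Finset V := fun i => if i = p.1 then A else if i = p.2 then B else L' i
    have hL''L' : ∀ i, L'' i ⊆ L' i := fun i => by
      by_cases h1 : i = p.1
      · subst h1; simpa [L''] using hA
      by_cases h2 : i = p.2
      · subst h2; simpa [L'', h1] using hB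
      simp [L'', h1, h2]
    refine .inr ⟨L'', fun i => ⟨(hL''L' i).trans (hL' i).1, ?_⟩, ?_⟩
    · by_cases h1 : i = p.1
      · simpa [L'', h1] using hAt
      by_cases h2 : i = p.2
      · simpa [L'', h2, hp] using hBt
      simpa [L'', h1, h2] using (le_bipartiteRamseyBound t).trans (hL' i).2
    · rintro q hq
      rcases mem_insert.mp hq with rfl | hq
      · simpa [L'', hp] using hAB
      · exact (hPL' q hq).mono (by simpa using hL''L' q.1) (by simpa using hL''L' q.2)

end Ramsey

section Neighbors

variable [DecidableRel G.Adj]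

variable (G) in
def commonNeighborsIn (Y S : Finset V) : Finset V := {y ∈ Y | ∀ x ∈ S, G.Adj x y}

theorem isCompleteBetween_commonNeighborsIn (Y S : Finset V) :
    G.IsCompleteBetween S (G.commonNeighborsIn Y S) :=
  fun _ hx _ hy => (mem_filter.mp hy).2 _ hx

variable [DecidableEq V]

variable (G) in
def privateNeighborsIn (Y C : Finset V) (c : V) : Finset V :=
  {y ∈ Y | G.Adj c y ∧ ∀ c' ∈ C, c' ≠ c → ¬ G.Adj c' y}

theorem commonNeighborsIn_commonNeighborsIn (Y S S' : Finset V) :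
    G.commonNeighborsIn (G.commonNeighborsIn Y S) S' = G.commonNeighborsIn Y (S ∪ S') := by
  ext y
  simp only [commonNeighborsIn, mem_filter, mem_union]
  grind

theorem privateNeighborsIn_mono {Y Y' : Finset V} (hY : Y' ⊆ Y) (C : Finset V) (c : V) :
    G.privateNeighborsIn Y' C c ⊆ G.privateNeighborsIn Y C c :=
  filter_subset_filter _ hY

theorem card_commonNeighborsIn_le (Y C : Finset V) (c : V) :
    #(G.commonNeighborsIn Y {c}) ≤
      #(G.privateNeighborsIn Y C c) + ∑ c' ∈ C.erase c, #(G.commonNeighborsIn Y {c, c'}) := by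
  refine (card_le_card fun y hy => ?_).trans ((card_union_le _ _).trans
    (Nat.add_le_add_left card_biUnion_le _))
  simp only [commonNeighborsIn, mem_filter, forall_eq, mem_singleton] at hy
  by_cases hpriv : ∀ c' ∈ C, c' ≠ c → ¬ G.Adj c' y
  · exact mem_union_left _ (mem_filter.mpr ⟨hy.1, hy.2, hpriv⟩)
  · push Not at hpriv
    obtain ⟨c', hc', hne, hadj⟩ := hpriv
    refine mem_union_right _ (mem_biUnion.mpr ⟨c', mem_erase.mpr ⟨hne, hc'⟩, ?_⟩)
    simp [commonNeighborsIn, hy.1, hy.2, hadj]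

theorem le_card_privateNeighborsIn {Y C : Finset V} {c : V} {n d ℓ : ℕ} (hC : #C ≤ n)
    (hdeg : n * d + ℓ ≤ #(G.commonNeighborsIn Y {c}))
    (hlight : ∀ c' ∈ C, c ≠ c' → #(G.commonNeighborsIn Y {c, c'}) ≤ d) :
    ℓ ≤ #(G.privateNeighborsIn Y C c) := by
  have hsum : ∑ c' ∈ C.erase c, #(G.commonNeighborsIn Y {c, c'}) ≤ n * d :=
    calc _ ≤ #(C.erase c) * d := by
          simpa using sum_le_card_nsmul _ _ d fun c' hc' =>
            hlight c' (mem_of_mem_erase hc') (ne_of_mem_erase hc').symm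
      _ ≤ n * d := Nat.mul_le_mul_right d ((card_erase_le).trans hC)
  have := G.card_commonNeighborsIn_le Y C c
  omega

variable (G) in
theorem exists_le_card_adj_or_isNIndepSet (r m : ℕ) (T : Finset V) (hT : r * (m + 1) ≤ #T) :
    (∃ c ∈ T, m ≤ #{x ∈ T | G.Adj c x}) ∨ ∃ I ⊆ T, G.IsNIndepSet r I := by
  induction r generalizing T with
  | zero => exact .inr ⟨∅, empty_subset T, ⟨by simp, rfl⟩⟩
  | succ r ih =>
    rw [Nat.succ_mul] at hT
    obtain ⟨c, hc⟩ : T.Nonempty := card_pos.mp (by omega)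
    by_cases hcm : m ≤ #{x ∈ T | G.Adj c x}
    · exact .inl ⟨c, hc, hcm⟩
    have hT' : r * (m + 1) ≤ #(T \ insert c {x ∈ T | G.Adj c x}) := by
      have := card_insert_le c {x ∈ T | G.Adj c x}
      have := le_card_sdiff (insert c {x ∈ T | G.Adj c x}) T
      omega
    rcases ih _ hT' with ⟨c', hc', hc'm⟩ | ⟨I, hIT', hI⟩
    · exact .inl ⟨c', sdiff_subset hc',
        hc'm.trans (card_le_card (filter_subset_filter _ sdiff_subset))⟩
    have hcI : c ∉ I := fun h => (mem_sdiff.mp (hIT' h)).2 (mem_insert_self _ _)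
    have hcI' : ∀ x ∈ I, ¬ G.Adj c x := fun x hx hcx =>
      (mem_sdiff.mp (hIT' hx)).2 (mem_insert_of_mem (mem_filter.mpr ⟨sdiff_subset (hIT' hx), hcx⟩))
    refine .inr ⟨insert c I, insert_subset hc (hIT'.trans sdiff_subset), ?_, ?_⟩
    · rw [coe_insert, isIndepSet_insert]
      exact ⟨hI.isIndepSet, fun x hx _ => hcI' x hx⟩
    · rw [card_insert_of_notMem hcI, hI.card_eq]

end Neighbors

theorem exists_commonNeighborsIn_or_privateNeighborsIn (n ℓ L j : ℕ) :
    ∃ m d : ℕ, ∀ {V : Type*} [DecidableEq V] (G : SimpleGraph V) [DecidableRel G.Adj]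
      (T Y : Finset V), m ≤ #T → (∀ x ∈ T, d ≤ #(G.commonNeighborsIn Y {x})) →
      (∃ S ⊆ T, j ≤ #S ∧ L ≤ #(G.commonNeighborsIn Y S)) ∨
        ∃ C ⊆ T, #C = n ∧ ∀ c ∈ C, ℓ ≤ #(G.privateNeighborsIn Y C c) := by
  induction j with
  | zero =>
    refine ⟨1, L, fun G _ T Y hT hdeg => ?_⟩
    obtain ⟨x, hx⟩ := card_pos.mp hT
    exact .inl ⟨{x}, singleton_subset_iff.mpr hx, Nat.zero_le _, hdeg x hx⟩
  | succ j ih =>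
    obtain ⟨m, d, ih⟩ := ih
    refine ⟨n * (m + 1), n * d + ℓ, fun {V} _ G _ T Y hT hdeg => ?_⟩
    classical
    let H : SimpleGraph V := fromRel fun x y => d ≤ #(G.commonNeighborsIn Y {x, y})
    have hH : ∀ {x y}, H.Adj x y ↔ x ≠ y ∧ d ≤ #(G.commonNeighborsIn Y {x, y}) := by
      intro x y; simp [H, pair_comm]
    rcases H.exists_le_card_adj_or_isNIndepSet n m T hT with ⟨c, hcT, hc⟩ | ⟨C, hCT, hC⟩
    · set T₁ := {x ∈ T | H.Adj c x}
      have hdeg₁ : ∀ x ∈ T₁, d ≤ #(G.commonNeighborsIn (G.commonNeighborsIn Y {c}) {x}) := by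
        intro x hx
        rw [commonNeighborsIn_commonNeighborsIn, singleton_union]
        exact (hH.mp (mem_filter.mp hx).2).2
      rcases ih G T₁ _ hc hdeg₁ with ⟨S, hST₁, hS, hSY⟩ | ⟨C, hCT₁, hC, hCY⟩
      · have hcS : c ∉ S := fun h => H.irrefl (mem_filter.mp (hST₁ h)).2
        refine .inl ⟨insert c S, insert_subset hcT (hST₁.trans (filter_subset _ _)), ?_, ?_⟩
        · rw [card_insert_of_notMem hcS]; omega
        · rwa [commonNeighborsIn_commonNeighborsIn, singleton_union] at hSY
      · exact .inr ⟨C, hCT₁.trans (filter_subset _ _), hC, fun c' hc' =>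
          (hCY c' hc').trans (card_le_card (privateNeighborsIn_mono (filter_subset _ _) _ _))⟩
    · refine .inr ⟨C, hCT, hC.card_eq, fun c hc =>
        le_card_privateNeighborsIn hC.card_eq.le (hdeg c (hCT hc)) fun c' hc' hne => ?_⟩
      exact (not_le.mp fun h => hC.isIndepSet hc hc' hne (hH.mpr ⟨hne, h⟩)).le

def completeBipartiteGraphEmbedding {α β : Type*} (f : α ↪ V) (g : β ↪ V)
    (hf : ∀ a a', ¬ G.Adj (f a) (f a')) (hg : ∀ b b', ¬ G.Adj (g b) (g b'))
    (hfg : ∀ a b, G.Adj (f a) (g b)) : completeBipartiteGraph α β ↪g G where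
  toFun := Sum.elim f g
  inj' := f.injective.sumElim g.injective fun a b => G.ne_of_adj (hfg a b)
  map_rel_iff' := by
    rintro (a | b) (a' | b') <;>
      simp [hf, hg, hfg, fun a b => (G.adj_symm (hfg a b) : G.Adj (g b) (f a))]

def completeBipartiteGraphEmbeddingOfLE {m n : ℕ} (h : m ≤ n) :
    completeBipartiteGraph (Fin m) (Fin m) ↪g completeBipartiteGraph (Fin n) (Fin n) :=
  completeBipartiteGraphEmbedding ((Fin.castLEEmb h).trans .inl) ((Fin.castLEEmb h).trans .inr)
    (by simp) (by simp) (by simp)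

def starForestEmbedding {n : ℕ} (c : Fin n → V) (leaf : Fin n → Fin n → V)
    (hleaf_inj : ∀ i, Function.Injective (leaf i)) (hc : ∀ i k, ¬ G.Adj (c i) (c k))
    (hleaf : ∀ i k j, G.Adj (c i) (leaf k j) ↔ i = k)
    (hleaves : ∀ i j k l, ¬ G.Adj (leaf i j) (leaf k l)) : starForest n ↪g G where
  toFun p := Fin.cases (c p.1) (leaf p.1) p.2
  inj' := by
    rintro ⟨i, j⟩ ⟨k, l⟩ h
    induction j using Fin.cases <;> induction l using Fin.cases <;>
      simp only [Fin.cases_zero, Fin.cases_succ] at h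
    · have hki : k = i := (hleaf k i i).mp (h ▸ (hleaf i i i).mpr rfl)
      rw [hki]
    · exact absurd (h ▸ (hleaf k k _).mpr rfl) (hc k i)
    · exact absurd (h ▸ (hleaf i i _).mpr rfl) (hc i k)
    · obtain rfl : i = k := (hleaf i k _).mp (h ▸ (hleaf i i _).mpr rfl)
      rw [hleaf_inj i h]
  map_rel_iff' := by
    rintro ⟨i, j⟩ ⟨k, l⟩
    change G.Adj (Fin.cases (c i) (leaf i) j) (Fin.cases (c k) (leaf k) l) ↔ _
    induction j using Fin.cases <;> induction l using Fin.cases <;>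
      simp [starForest, hc, hleaf, hleaves, G.adj_comm (leaf _ _), Fin.succ_ne_zero, eq_comm]

def starForestEmbeddingOfLE {m n : ℕ} (h : m ≤ n) : starForest m ↪g starForest n :=
  starForestEmbedding (fun i => (Fin.castLE h i, 0))
    (fun i j => (Fin.castLE h i, (Fin.castLE h j).succ)) (fun i j j' hj => by simpa using hj)
    (by simp [starForest]) (fun _ _ _ => by simp [starForest, (Fin.succ_ne_zero _).symm])
    (by simp [starForest, Fin.succ_ne_zero])

theorem CliqueFree.nonempty_completeBipartiteGraph_embedding [DecidableEq V] {n : ℕ}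
    (hG : G.CliqueFree n)
    (h : completeBipartiteGraph (Fin ((n + n).choose n)) (Fin ((n + n).choose n)) ⊑ G) :
    Nonempty (completeBipartiteGraph (Fin n) (Fin n) ↪g G) := by
  obtain ⟨A, B, hA, hB, hAB⟩ := completeBipartiteGraph_isContained_iff.mp h
  obtain ⟨A', hA'A, hA', hA'i⟩ := hG.exists_isIndepSet (t := n) (A := A) (by simp [hA])
  obtain ⟨B', hB'B, hB', hB'i⟩ := hG.exists_isIndepSet (t := n) (A := B) (by simp [hB])
  obtain ⟨f, hf⟩ := exists_embedding_fin_of_le_card hA'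
  obtain ⟨g, hg⟩ := exists_embedding_fin_of_le_card hB'
  exact ⟨completeBipartiteGraphEmbedding f g (fun a a' => hA'i.not_adj (hf a) (hf a'))
    (fun b b' => hB'i.not_adj (hg b) (hg b')) fun a b => hAB (hA'A (hf a)) (hB'B (hg b))⟩

theorem CliqueFree.nonempty_starForest_embedding_or_isContained [DecidableEq V]
    [DecidableRel G.Adj] {n t : ℕ} (hG : G.CliqueFree n) (hnt : n ≤ t) {C Y : Finset V}
    (hC : #C = n) (hCi : G.IsIndepSet C)
    (hCY : ∀ c ∈ C, (n + bipartiteRamseyBound^[n * n - n] t).choose n ≤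
      #(G.privateNeighborsIn Y C c)) :
    Nonempty (starForest n ↪g G) ∨ completeBipartiteGraph (Fin t) (Fin t) ⊑ G := by
  set c : Fin n → V := fun i => ((equivFinOfCardEq hC).symm i : V)
  have hcC : ∀ i, c i ∈ C := fun i => ((equivFinOfCardEq hC).symm i).2
  have hc : Function.Injective c :=
    Subtype.val_injective.comp (equivFinOfCardEq hC).symm.injective
  choose L hLY hL hLi using fun i => hG.exists_isIndepSet (hCY (c i) (hcC i))
  rcases G.isContained_or_exists_isAnticompleteBetween (univ : Finset (Fin n)).offDiag
      (fun p hp => (mem_offDiag.mp hp).2.2) t L (by simpa [offDiag_card] using hL)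
    with hK | ⟨L', hL', hL'L'⟩
  · exact .inr hK
  choose leaf hleaf using fun i => exists_embedding_fin_of_le_card (hnt.trans (hL' i).2)
  have hleafL : ∀ i j, leaf i j ∈ L i := fun i j => (hL' i).1 (hleaf i j)
  refine .inl ⟨starForestEmbedding c (fun i => leaf i) (fun i => (leaf i).injective)
    (fun i k => hCi.not_adj (hcC i) (hcC k)) (fun i k j => ?_) (fun i j k l => ?_)⟩
  · obtain ⟨-, hadj, hnadj⟩ := mem_filter.mp (hLY k (hleafL k j))
    exact ⟨fun h => by_contra fun hik => hnadj (c i) (hcC i) (hc.ne hik) h,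
      by rintro rfl; exact hadj⟩
  · by_cases hik : i = k
    · subst hik; exact (hLi i).not_adj (hleafL i j) (hleafL i l)
    · exact hL'L' (i, k) (by simp [hik]) (hleaf i j) (hleaf k l)

end SimpleGraph

theorem HIndexAtLeast.exists_finset {V : Type*} [Fintype V] [DecidableEq V] {G : SimpleGraph V}
    [DecidableRel G.Adj] {k : ℕ} (h : HIndexAtLeast G k) :
    ∃ A : Finset V, k ≤ #A ∧ ∀ v ∈ A, k ≤ #(G.commonNeighborsIn univ {v}) := by
  have hdeg : ∀ v, (G.neighborSet v).ncard = #(G.commonNeighborsIn univ {v}) := fun v => by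
    rw [← Set.ncard_coe_finset]; congr 1; ext; simp [commonNeighborsIn]
  refine ⟨({v | k ≤ #(G.commonNeighborsIn univ {v})} : Finset V), ?_,
    fun v hv => (mem_filter.mp hv).2⟩
  unfold HIndexAtLeast at h
  rw [← Set.ncard_coe_finset]
  convert h using 3
  simp [hdeg]

theorem hIndexAtLeast_of_injective {V : Type*} [Finite V] (G : SimpleGraph V) {k : ℕ}
    (c : Fin k → V) (hc : Function.Injective c) (nbr : Fin k → Fin k → V)
    (hnbr : ∀ i, Function.Injective (nbr i)) (hadj : ∀ i j, G.Adj (c i) (nbr i j)) :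
    HIndexAtLeast G k := by
  have hk : ∀ f : Fin k → V, Function.Injective f → k = (Set.range f).ncard := fun f hf => by
    rw [Set.ncard_range_of_injective hf, Nat.card_fin]
  refine (hk c hc).trans_le (Set.ncard_le_ncard ?_ (Set.toFinite _))
  rintro _ ⟨i, rfl⟩
  exact (hk _ (hnbr i)).trans_le (Set.ncard_le_ncard (by rintro _ ⟨j, rfl⟩; exact hadj i j)
    (Set.toFinite _))

theorem hIndexAtLeast_top (k : ℕ) : HIndexAtLeast (⊤ : SimpleGraph (Fin (k + 1))) k :=
  hIndexAtLeast_of_injective _ Fin.castSucc (Fin.castSucc_injective k)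
    (fun i => (Fin.castSucc i).succAbove) (fun _ => Fin.succAbove_right_injective)
    fun _ j => (Fin.succAbove_ne _ j).symm

theorem hIndexAtLeast_completeBipartiteGraph (k : ℕ) :
    HIndexAtLeast (completeBipartiteGraph (Fin k) (Fin k)) k :=
  hIndexAtLeast_of_injective _ Sum.inl Sum.inl_injective (fun _ => Sum.inr)
    (fun _ => Sum.inr_injective) fun _ _ => by simp

theorem hIndexAtLeast_starForest (k : ℕ) : HIndexAtLeast (starForest k) k :=
  hIndexAtLeast_of_injective _ (fun i => (i, 0)) (fun _ _ h => congrArg Prod.fst h)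
    (fun i j => (i, j.succ)) (fun _ _ _ h => Fin.succ_injective _ (congrArg Prod.snd h))
    fun i j => by simp [starForest, (Fin.succ_ne_zero j).symm]

theorem exists_embedding_of_hIndexAtLeast (n : ℕ) :
    ∃ K : ℕ, ∀ {V : Type*} [Fintype V] (G : SimpleGraph V), HIndexAtLeast G K →
      Nonempty ((⊤ : SimpleGraph (Fin n)) ↪g G) ∨
        Nonempty (completeBipartiteGraph (Fin n) (Fin n) ↪g G) ∨
          Nonempty (starForest n ↪g G) := by
  set s := (n + n).choose n
  have hns : n ≤ s := by
    have := Nat.choose_le_centralBinom 1 n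
    rw [Nat.centralBinom, Nat.choose_one_right, two_mul] at this
    omega
  obtain ⟨m, d, hmd⟩ := exists_commonNeighborsIn_or_privateNeighborsIn n
    ((n + bipartiteRamseyBound^[n * n - n] s).choose n) s s
  refine ⟨max ((n + m).choose n) d, fun G hG => ?_⟩
  classical
  by_cases hK : G.CliqueFree n
  swap
  · exact .inl ⟨topEmbeddingOfNotCliqueFree hK⟩
  obtain ⟨A, hA, hAdeg⟩ := hG.exists_finset
  obtain ⟨T, hTA, hT, hTi⟩ := hK.exists_isIndepSet (le_of_max_le_left hA)
  rcases hmd G T univ hT fun x hx => le_of_max_le_right (hAdeg x (hTA hx)) with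
    ⟨S, -, hS, hSY⟩ | ⟨C, hCT, hC, hCY⟩
  · exact .inr (.inl (hK.nonempty_completeBipartiteGraph_embedding
      (completeBipartiteGraph_isContained_of_isCompleteBetween
        (isCompleteBetween_commonNeighborsIn univ S) hS hSY)))
  · rcases hK.nonempty_starForest_embedding_or_isContained hns hC
      (Set.Pairwise.mono (coe_subset.mpr hCT) hTi) hCY with h | h
    · exact .inr (.inr h)
    · exact .inr (.inl (hK.nonempty_completeBipartiteGraph_embedding h))

theorem Hereditary.exists_iso_of_embedding {C : GraphClass} (hC : Hereditary C) {N m : ℕ}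
    {W : Type*} {G : SimpleGraph (Fin N)} {H : SimpleGraph W} (hG : C N G)
    (hHG : Nonempty (H ↪g G)) (e : Fin m ≃ W) :
    ∃ G' : SimpleGraph (Fin m), Nonempty (G' ≃g H) ∧ C m G' :=
  ⟨H.comap e, ⟨Iso.comap e H⟩, hC G _ hG ⟨hHG.some.comp (Iso.comap e H).toEmbedding⟩⟩

theorem forall_or_forall_or_forall_of_antitone {P Q R : ℕ → Prop} (hP : Antitone P)
    (hQ : Antitone Q) (hR : Antitone R) (h : ∀ n, P n ∨ Q n ∨ R n) :
    (∀ n, P n) ∨ (∀ n, Q n) ∨ ∀ n, R n := by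
  by_contra! ⟨⟨a, ha⟩, ⟨b, hb⟩, ⟨c, hc⟩⟩
  rcases h (max a (max b c)) with h | h | h
  · exact ha (hP (by omega) h)
  · exact hb (hQ (by omega) h)
  · exact hc (hR (by omega) h)

/-- A hereditary class of unbounded h-index contains all complete graphs, or all
complete bipartite graphs `K_{n,n}`, or all star forests `nK_{1,n}`; conversely the
classes of complete graphs, of complete bipartite graphs, and of star forests each
have unbounded h-index — so these are the only three minimal hereditary classes of
unbounded h-index. -/
theorem statement18 (C : GraphClass) (hC : Hereditary C)
    (hunb : ∀ k : ℕ, ∃ (n : ℕ) (G : SimpleGraph (Fin n)), C n G ∧ HIndexAtLeast G k) :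
    ((∀ n : ℕ, C n ⊤) ∨
      (∀ n : ℕ, ∃ G : SimpleGraph (Fin (n + n)),
        Nonempty (G ≃g completeBipartiteGraph (Fin n) (Fin n)) ∧ C (n + n) G) ∨
      (∀ n : ℕ, ∃ G : SimpleGraph (Fin (n * (n + 1))),
        Nonempty (G ≃g starForest n) ∧ C (n * (n + 1)) G)) ∧
    (∀ k : ℕ, ∃ n : ℕ, HIndexAtLeast (⊤ : SimpleGraph (Fin n)) k) ∧
    (∀ k : ℕ, ∃ n : ℕ, HIndexAtLeast (completeBipartiteGraph (Fin n) (Fin n)) k) ∧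
    (∀ k : ℕ, ∃ n : ℕ, HIndexAtLeast (starForest n) k) := by
  refine ⟨forall_or_forall_or_forall_of_antitone ?_ ?_ ?_ fun n => ?_,
    fun k => ⟨k + 1, hIndexAtLeast_top k⟩, fun k => ⟨k, hIndexAtLeast_completeBipartiteGraph k⟩,
    fun k => ⟨k, hIndexAtLeast_starForest k⟩⟩
  · exact fun m n hmn h => hC _ _ h ⟨Embedding.completeGraph (Fin.castLEEmb hmn)⟩
  · rintro m n hmn ⟨G, ⟨e⟩, hG⟩
    exact hC.exists_iso_of_embedding hG
      ⟨e.symm.toEmbedding.comp (completeBipartiteGraphEmbeddingOfLE hmn)⟩ finSumFinEquiv.symm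
  · rintro m n hmn ⟨G, ⟨e⟩, hG⟩
    exact hC.exists_iso_of_embedding hG ⟨e.symm.toEmbedding.comp (starForestEmbeddingOfLE hmn)⟩
      finProdFinEquiv.symm
  obtain ⟨K, hK⟩ := exists_embedding_of_hIndexAtLeast n
  obtain ⟨N, G, hG, hGK⟩ := hunb K
  rcases hK G hGK with h | h | h
  · exact .inl (hC G ⊤ hG h)
  · exact .inr (.inl (hC.exists_iso_of_embedding hG h finSumFinEquiv.symm))
  · exact .inr (.inr (hC.exists_iso_of_embedding hG h finProdFinEquiv.symm))
end

section
/- For every integer n ≥ 1 there exists an integer d = d(n) such that every finite simple graph containing at least d vertices of degree at least d (i.e., of h-index at least d) contains a clique of size n, or an induced subgraph isomorphic to the complete bipartite graph K_{n,n}, or an induced subgraph isomorphic to nK_{1,n} (the disjoint union of n copies of the star K_{1,n}). -/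
/-!
Assume `G` has no `n`-clique, so that any `(n + b).choose n` vertices contain an independent
`b`-set, and let `r = (n + n).choose n`. Ramsey gives an independent set `C` of `n (2n + 1)`
vertices of huge degree. If some `n` of them have `r` common neighbours, an independent `n`-set
among those neighbours spans an induced `K_{n,n}` with them. Otherwise few vertices are adjacent
to `n` centres, so every centre `w` has a huge pool of neighbours adjacent to fewer than `n`
centres; shrinking it by a factor `2 ^ #C` makes each centre adjacent to all of it or to none of
it, hence at most `n` centres see the pool of `w`. Since `#C ≥ n (2n + 1)`, some `n` centres see
no pool but their own. Finally the pools are cleaned pair by pair: two pools either contain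
complete `r`-sets `A`, `B` (whence an induced `K_{n,n}`) or large subpools without edges between
them. Independent `n`-subsets of the cleaned pools are the leaves of an induced `nK_{1,n}`.
-/

open SimpleGraph Finset

theorem starForest_adj {n : ℕ} {p q : Fin n × Fin (n + 1)} :
    (starForest n).Adj p q ↔ p.1 = q.1 ∧ (p.2 = 0 ∧ q.2 ≠ 0 ∨ q.2 = 0 ∧ p.2 ≠ 0) := by
  simp only [starForest, fromRel_adj]
  grind

variable {α β ι : Type*}

theorem Finset.exists_fin_embedding_forall_mem {s : Finset α} {n : ℕ} (h : n ≤ #s) :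
    ∃ f : Fin n ↪ α, ∀ i, f i ∈ s := by
  obtain ⟨f, hf⟩ := Function.Embedding.exists_of_card_le_finset (α := Fin n) (by simpa using h)
  exact ⟨f, fun i => hf (Set.mem_range_self i)⟩

theorem Finset.exists_subset_forall_or_forall_not (R : α → β → Prop)
    (A : Finset α) (B : Finset β) :
    ∃ B' ⊆ B, #B ≤ 2 ^ #A * #B' ∧ ∀ a ∈ A, (∀ b ∈ B', R a b) ∨ ∀ b ∈ B', ¬R a b := by
  classical
  induction A using Finset.induction_on with
  | empty => exact ⟨B, subset_rfl, by simp, by simp⟩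
  | insert a A ha ih =>
    obtain ⟨B', hB'B, hB, hhom⟩ := ih
    have hsplit : #{b ∈ B' | R a b} + #{b ∈ B' | ¬R a b} = #B' :=
      card_filter_add_card_filter_not _
    obtain ⟨B'', hB'', hhalf, ha'⟩ : ∃ B'' ⊆ B', #B' ≤ 2 * #B'' ∧
        ((∀ b ∈ B'', R a b) ∨ ∀ b ∈ B'', ¬R a b) := by
      rcases le_total #{b ∈ B' | ¬R a b} #{b ∈ B' | R a b} with h | h
      · exact ⟨{b ∈ B' | R a b}, filter_subset _ _, by omega, .inl fun b hb => (mem_filter.1 hb).2⟩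
      · exact ⟨{b ∈ B' | ¬R a b}, filter_subset _ _, by omega,
          .inr fun b hb => (mem_filter.1 hb).2⟩
    refine ⟨B'', hB''.trans hB'B, ?_, ?_⟩
    · calc #B ≤ 2 ^ #A * #B' := hB
        _ ≤ 2 ^ #A * (2 * #B'') := Nat.mul_le_mul_left _ hhalf
        _ = 2 ^ #(insert a A) * #B'' := by rw [card_insert_of_notMem ha, pow_succ]; ring
    · intro a' ha''
      rcases mem_insert.1 ha'' with rfl | ha''
      · exact ha'
      · exact (hhom a' ha'').imp (fun h b hb => h b (hB'' hb)) fun h b hb => h b (hB'' hb)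

theorem Finset.exists_complete_or_anticomplete (R : α → β → Prop) {r s : ℕ}
    {P : Finset α} {Q : Finset β} (hP : r + s ≤ #P) (hQ : 2 ^ (r + s) * s ≤ #Q) :
    (∃ A ⊆ P, ∃ B ⊆ Q, r ≤ #A ∧ s ≤ #B ∧ ∀ a ∈ A, ∀ b ∈ B, R a b) ∨
      ∃ A ⊆ P, ∃ B ⊆ Q, s ≤ #A ∧ s ≤ #B ∧ ∀ a ∈ A, ∀ b ∈ B, ¬R a b := by
  classical
  obtain ⟨K, hKP, hK⟩ := exists_subset_card_eq hP
  obtain ⟨B, hBQ, hB, hhom⟩ := exists_subset_forall_or_forall_not R K Q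
  have hsB : s ≤ #B := by
    rw [hK] at hB
    exact Nat.le_of_mul_le_mul_left (hQ.trans hB) (by positivity)
  have hsplit : #{a ∈ K | ∀ b ∈ B, R a b} + #{a ∈ K | ¬∀ b ∈ B, R a b} = #K :=
    card_filter_add_card_filter_not _
  by_cases hr : r ≤ #{a ∈ K | ∀ b ∈ B, R a b}
  · exact .inl ⟨{a ∈ K | ∀ b ∈ B, R a b}, (filter_subset _ _).trans hKP, B, hBQ, hr, hsB,
      fun a ha => (mem_filter.1 ha).2⟩
  · refine .inr ⟨{a ∈ K | ¬∀ b ∈ B, R a b}, (filter_subset _ _).trans hKP, B, hBQ, by omega,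
      hsB, fun a ha => ?_⟩
    obtain ⟨haK, hna⟩ := mem_filter.1 ha
    exact (hhom a haK).resolve_left hna

-- cleaning one pair of pools costs `r + s` vertices of one and a factor `2 ^ (r + s)` of the other
def poolBound (r : ℕ) : ℕ → ℕ
  | 0 => r
  | m + 1 => 2 ^ (r + poolBound r m) * (r + poolBound r m)

theorem le_poolBound (r : ℕ) : ∀ m, r ≤ poolBound r m
  | 0 => le_rfl
  | m + 1 => le_add_right le_rfl |>.trans (Nat.le_mul_of_pos_left _ (by positivity))

theorem poolBound_mono (r : ℕ) : Monotone (poolBound r) :=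
  monotone_nat_of_le_succ fun m =>
    le_add_left le_rfl |>.trans (Nat.le_mul_of_pos_left _ (by positivity))

theorem Finset.exists_complete_or_anticomplete_at (R : α → α → Prop) {r m : ℕ} {i j : ι}
    (hij : i ≠ j) {P : ι → Finset α} (hP : ∀ k, poolBound r (m + 1) ≤ #(P k)) :
    (∃ A B : Finset α, r ≤ #A ∧ r ≤ #B ∧ ∀ a ∈ A, ∀ b ∈ B, R a b) ∨
      ∃ P' : ι → Finset α, (∀ k, P' k ⊆ P k) ∧ (∀ k, poolBound r m ≤ #(P' k)) ∧
        ∀ a ∈ P' i, ∀ b ∈ P' j, ¬R a b := by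
  classical
  set s := poolBound r m
  have hbound : poolBound r (m + 1) = 2 ^ (r + s) * (r + s) := rfl
  rcases exists_complete_or_anticomplete R (r := r) (s := s) (P := P i) (Q := P j)
    ((Nat.le_mul_of_pos_left _ (by positivity)).trans (hbound ▸ hP i))
    ((Nat.mul_le_mul_left _ (le_add_left le_rfl)).trans (hbound ▸ hP j)) with
    ⟨A, -, B, -, hA, hB, hAB⟩ | ⟨A, hA, B, hB, hAs, hBs, hAB⟩
  · exact .inl ⟨A, B, hA, (le_poolBound r _).trans hB, hAB⟩
  refine .inr ⟨Function.update (Function.update P i A) j B, fun k => ?_, fun k => ?_, ?_⟩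
  · simp only [Function.update_apply]
    split_ifs with hkj hki
    exacts [hkj ▸ hB, hki ▸ hA, subset_rfl]
  · simp only [Function.update_apply]
    split_ifs
    exacts [hBs, hAs, (poolBound_mono r m.le_succ).trans (hP k)]
  · simpa [hij] using hAB

theorem Finset.exists_complete_or_anticomplete_subfamily (R : α → α → Prop)
    (r : ℕ) (E : Finset (ι × ι)) (hE : ∀ p ∈ E, p.1 ≠ p.2)
    (P : ι → Finset α) (hP : ∀ i, poolBound r #E ≤ #(P i)) :
    (∃ A B : Finset α, r ≤ #A ∧ r ≤ #B ∧ ∀ a ∈ A, ∀ b ∈ B, R a b) ∨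
      ∃ P' : ι → Finset α, (∀ i, P' i ⊆ P i) ∧ (∀ i, r ≤ #(P' i)) ∧
        ∀ p ∈ E, ∀ a ∈ P' p.1, ∀ b ∈ P' p.2, ¬R a b := by
  classical
  induction E using Finset.induction_on generalizing P with
  | empty => exact .inr ⟨P, fun _ => subset_rfl, hP, by simp⟩
  | insert p E hpE ih =>
    rw [card_insert_of_notMem hpE] at hP
    rcases exists_complete_or_anticomplete_at R (hE p (mem_insert_self _ _)) hP with
      hcomplete | ⟨P₁, hP₁P, hP₁, hp⟩
    · exact .inl hcomplete
    rcases ih (fun q hq => hE q (mem_insert_of_mem hq)) P₁ hP₁ with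
      hcomplete | ⟨P', hP'P₁, hP'r, hP'E⟩
    · exact .inl hcomplete
    refine .inr ⟨P', fun k => (hP'P₁ k).trans (hP₁P k), hP'r, ?_⟩
    rintro q hq a ha b hb
    rcases mem_insert.1 hq with rfl | hq
    · exact hp a (hP'P₁ _ ha) b (hP'P₁ _ hb)
    · exact hP'E q hq a ha b hb

theorem Finset.exists_card_filter_mem_le [DecidableEq α] {out : α → Finset α} {d : ℕ}
    {s : Finset α} (hs : s.Nonempty) (hout : ∀ v ∈ s, #(out v) ≤ d) :
    ∃ v ∈ s, #{w ∈ s | v ∈ out w} ≤ d := by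
  refine exists_le_of_sum_le hs ?_
  calc ∑ v ∈ s, #{w ∈ s | v ∈ out w}
      = ∑ w ∈ s, #{v ∈ s | v ∈ out w} :=
        (sum_card_bipartiteAbove_eq_sum_card_bipartiteBelow (fun w v => v ∈ out w)).symm
    _ ≤ ∑ w ∈ s, d := sum_le_sum fun w hw =>
        (card_le_card fun v hv => (mem_filter.1 hv).2).trans (hout w hw)

theorem Finset.exists_subset_card_eq_forall_notMem [DecidableEq α] (out : α → Finset α) (d : ℕ) :
    ∀ (m : ℕ) (s : Finset α), (∀ v ∈ s, #(out v) ≤ d) → m * (2 * d + 1) ≤ #s →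
      ∃ t ⊆ s, #t = m ∧ ∀ v ∈ t, ∀ w ∈ t, v ≠ w → w ∉ out v
  | 0, _, _, _ => ⟨∅, empty_subset _, rfl, by simp⟩
  | m + 1, s, hout, hs => by
    obtain ⟨v, hv, hin⟩ := exists_card_filter_mem_le
      (card_pos.1 (lt_of_lt_of_le (by positivity) hs)) hout
    set s' := s \ insert v (out v ∪ {w ∈ s | v ∈ out w})
    have hs' : m * (2 * d + 1) ≤ #s' := by
      have h₁ : #s - #(insert v (out v ∪ {w ∈ s | v ∈ out w})) ≤ #s' := le_card_sdiff _ _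
      have h₂ := card_insert_le v (out v ∪ {w ∈ s | v ∈ out w})
      have h₃ := card_union_le (out v) {w ∈ s | v ∈ out w}
      have h₄ := hout v hv
      rw [add_mul, one_mul] at hs
      omega
    obtain ⟨t, hts', ht, hindep⟩ := exists_subset_card_eq_forall_notMem out d m s'
      (fun w hw => hout w (sdiff_subset hw)) hs'
    have hvt : v ∉ t := fun h => (mem_sdiff.1 (hts' h)).2 (mem_insert_self _ _)
    have hnot : ∀ w ∈ t, w ∉ out v ∧ v ∉ out w := fun w hw => by
      obtain ⟨hws, hw'⟩ := mem_sdiff.1 (hts' hw)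
      simp only [mem_insert, mem_union, mem_filter, not_or, not_and] at hw'
      exact ⟨hw'.2.1, hw'.2.2 hws⟩
    refine ⟨insert v t, insert_subset hv (hts'.trans sdiff_subset),
      by rw [card_insert_of_notMem hvt, ht], ?_⟩
    simp only [mem_insert]
    rintro x (rfl | hx) y (rfl | hy) hxy
    · exact absurd rfl hxy
    · exact (hnot y hy).1
    · exact (hnot x hx).2
    · exact hindep x hx y hy hxy

theorem Finset.card_filter_le_choose_mul [Fintype β] (R : α → β → Prop) [DecidableRel R]
    (C : Finset α) {n r : ℕ}
    (h : ∀ T ⊆ C, #T = n → ∀ U : Finset β, (∀ x ∈ T, ∀ y ∈ U, R x y) → #U ≤ r) :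
    #{y | n ≤ #{x ∈ C | R x y}} ≤ (#C).choose n * r := by
  classical
  calc #{y | n ≤ #{x ∈ C | R x y}}
      ≤ #((C.powersetCard n).biUnion fun T => {y | ∀ x ∈ T, R x y}) := by
        refine card_le_card fun y hy => ?_
        obtain ⟨T, hT, hTn⟩ := exists_subset_card_eq (mem_filter.1 hy).2
        exact mem_biUnion.2 ⟨T, mem_powersetCard.2 ⟨hT.trans (filter_subset _ _), hTn⟩,
          mem_filter.2 ⟨mem_univ _, fun x hx => (mem_filter.1 (hT hx)).2⟩⟩
    _ ≤ ∑ T ∈ C.powersetCard n, #{y | ∀ x ∈ T, R x y} := card_biUnion_le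
    _ ≤ (#C).choose n * r := by
        rw [← card_powersetCard, ← smul_eq_mul]
        refine sum_le_card_nsmul _ _ _ fun T hT => ?_
        obtain ⟨hTC, hTn⟩ := mem_powersetCard.1 hT
        exact h T hTC hTn _ fun x hx y hy => (mem_filter.1 hy).2 x hx

theorem Finset.exists_subset_card_filter_exists_le (R : α → β → Prop) [DecidableRel R]
    (C : Finset α) {D : Finset β} {n s : ℕ} (hD : ∀ y ∈ D, #{x ∈ C | R x y} < n)
    (hDs : 2 ^ #C * s ≤ #D) :
    ∃ P ⊆ D, s ≤ #P ∧ #{x ∈ C | ∃ y ∈ P, R x y} ≤ n := by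
  obtain ⟨P, hPD, hP, hhom⟩ := exists_subset_forall_or_forall_not R C D
  refine ⟨P, hPD, Nat.le_of_mul_le_mul_left (hDs.trans hP) (by positivity), ?_⟩
  rcases P.eq_empty_or_nonempty with rfl | ⟨y₀, hy₀⟩
  · simp
  calc #{x ∈ C | ∃ y ∈ P, R x y}
      ≤ #{x ∈ C | R x y₀} := card_le_card fun x hx => by
        obtain ⟨hxC, y, hy, hxy⟩ := mem_filter.1 hx
        exact mem_filter.2 ⟨hxC, ((hhom x hxC).resolve_right fun h => h y hy hxy) y₀ hy₀⟩
    _ ≤ n := (hD y₀ (hPD hy₀)).le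

-- `(n + N).choose n` vertices yield `N = n (2n + 1)` independent centres; the degree of a centre
-- covers the `N.choose n * r` vertices adjacent to `n` centres and a pool of `2 ^ N` times the
-- final pool size
def hIndexThreshold (n : ℕ) : ℕ :=
  (n + n * (2 * n + 1)).choose n + (n * (2 * n + 1)).choose n * (n + n).choose n +
    2 ^ (n * (2 * n + 1)) * poolBound ((n + n).choose n) (n ^ 2)

namespace SimpleGraph

variable {V : Type*} {G : SimpleGraph V}

theorem IsIndepSet.not_adj_s19 {s : Set V} (hs : G.IsIndepSet s) {x y : V} (hx : x ∈ s)
    (hy : y ∈ s) : ¬G.Adj x y :=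
  fun h => hs hx hy h.ne h

theorem exists_isNClique_or_isNIndepSet :
    ∀ (a b : ℕ) (s : Finset V), (a + b).choose a ≤ #s →
      (∃ t ⊆ s, G.IsNClique a t) ∨ ∃ t ⊆ s, G.IsNIndepSet b t
  | 0, _, _, _ => .inl ⟨∅, empty_subset _, by simp⟩
  | _ + 1, 0, _, _ => .inr ⟨∅, empty_subset _, by simp [isNIndepSet_iff]⟩
  | a + 1, b + 1, s, hs => by
    classical
    obtain ⟨v, hv⟩ : s.Nonempty := card_pos.1 (lt_of_lt_of_le (Nat.choose_pos (by omega)) hs)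
    set A := {w ∈ s.erase v | G.Adj v w}
    set B := {w ∈ s.erase v | ¬G.Adj v w}
    have hAs : A ⊆ s := (filter_subset _ _).trans (erase_subset _ _)
    have hBs : B ⊆ s := (filter_subset _ _).trans (erase_subset _ _)
    have hAB : #A + #B + 1 = #s := by
      rw [card_filter_add_card_filter_not, card_erase_add_one hv]
    have hpascal : (a + 1 + (b + 1)).choose (a + 1) =
        (a + (b + 1)).choose a + (a + 1 + b).choose (a + 1) := by
      rw [show a + 1 + (b + 1) = (a + b + 1) + 1 by omega, Nat.choose_succ_succ,
        show a + (b + 1) = a + b + 1 by omega, show a + 1 + b = a + b + 1 by omega]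
    by_cases hA : (a + (b + 1)).choose a ≤ #A
    · obtain ⟨t, hts, ht⟩ | ⟨t, hts, ht⟩ := exists_isNClique_or_isNIndepSet a (b + 1) A hA
      · exact .inl ⟨insert v t, insert_subset hv (hts.trans hAs),
          ht.insert fun w hw => (mem_filter.1 (hts hw)).2⟩
      · exact .inr ⟨t, hts.trans hAs, ht⟩
    · obtain ⟨t, hts, ht⟩ | ⟨t, hts, ht⟩ :=
        exists_isNClique_or_isNIndepSet (a + 1) b B (by omega)
      · exact .inl ⟨t, hts.trans hBs, ht⟩
      · refine .inr ⟨insert v t, insert_subset hv (hts.trans hBs), ?_⟩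
        rw [← isNClique_compl] at ht ⊢
        refine ht.insert fun w hw => ?_
        obtain ⟨hws, hvw⟩ := mem_filter.1 (hts hw)
        exact ⟨(ne_of_mem_erase hws).symm, hvw⟩

theorem CliqueFree.exists_isNIndepSet {a b : ℕ}
    (hG : G.CliqueFree a) {s : Finset V} (hs : (a + b).choose a ≤ #s) :
    ∃ t ⊆ s, G.IsNIndepSet b t :=
  (exists_isNClique_or_isNIndepSet a b s hs).resolve_left fun ⟨t, _, ht⟩ => hG t ht

theorem nonempty_completeBipartiteGraph_embedding {n : ℕ} {A B : Finset V}
    (hA : G.IsNIndepSet n A) (hB : G.IsNIndepSet n B) (hAB : ∀ a ∈ A, ∀ b ∈ B, G.Adj a b) :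
    Nonempty (completeBipartiteGraph (Fin n) (Fin n) ↪g G) := by
  obtain ⟨f, hfA⟩ := exists_fin_embedding_forall_mem hA.card_eq.ge
  obtain ⟨g, hgB⟩ := exists_fin_embedding_forall_mem hB.card_eq.ge
  have hfg : ∀ i j, G.Adj (f i) (g j) := fun i j => hAB _ (hfA i) _ (hgB j)
  refine ⟨⟨⟨Sum.elim f g, f.injective.sumElim g.injective fun i j => (hfg i j).ne⟩, ?_⟩⟩
  rintro (i | i) (j | j)
  · simpa using hA.isIndepSet.not_adj_s19 (hfA i) (hfA j)
  · simpa using hfg i j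
  · simpa using (hfg j i).symm
  · simpa using hB.isIndepSet.not_adj_s19 (hgB i) (hgB j)

theorem nonempty_starForest_embedding {n : ℕ} {c : Fin n → V} {l : Fin n → Fin n → V}
    (hc : Function.Injective c) (hl : ∀ i, Function.Injective (l i))
    (hcc : ∀ i j, ¬G.Adj (c i) (c j)) (hcl : ∀ i j k, G.Adj (c i) (l j k) ↔ i = j)
    (hll : ∀ i j k k', ¬G.Adj (l i k) (l j k')) :
    Nonempty (starForest n ↪g G) := by
  let F : Fin n × Fin (n + 1) → V := fun p => Fin.cases (c p.1) (l p.1) p.2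
  have hinj : Function.Injective F := by
    rintro ⟨i, x⟩ ⟨j, y⟩ h
    cases x using Fin.cases <;> cases y using Fin.cases <;>
      simp only [F, Fin.cases_zero, Fin.cases_succ] at h
    · rw [hc h]
    · exact absurd (h ▸ (hcl j j _).2 rfl) (hcc j i)
    · exact absurd (h ▸ (hcl i i _).2 rfl) (hcc i j)
    · obtain rfl := (hcl i j _).1 (h ▸ (hcl i i _).2 rfl)
      rw [hl i h]
  refine ⟨⟨⟨F, hinj⟩, ?_⟩⟩
  rintro ⟨i, x⟩ ⟨j, y⟩
  cases x using Fin.cases <;> cases y using Fin.cases <;>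
    simp [F, starForest_adj, hcc, hcl, hll, G.adj_comm (l _ _), Fin.succ_ne_zero, eq_comm]

theorem completeBipartite_or_starForest_of_pools {n : ℕ} (hG : G.CliqueFree n)
    {c : Fin n → V} (hc : Function.Injective c) (hcc : ∀ i j, ¬G.Adj (c i) (c j))
    {P : Fin n → Finset V} (hP : ∀ i, poolBound ((n + n).choose n) (n ^ 2) ≤ #(P i))
    (hcP : ∀ i j, ∀ y ∈ P j, G.Adj (c i) y ↔ i = j) :
    Nonempty (completeBipartiteGraph (Fin n) (Fin n) ↪g G) ∨ Nonempty (starForest n ↪g G) := by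
  classical
  have hE : #(univ : Finset (Fin n)).offDiag ≤ n ^ 2 := by
    simp only [offDiag_card, card_univ, Fintype.card_fin]; rw [sq]; omega
  rcases exists_complete_or_anticomplete_subfamily G.Adj ((n + n).choose n)
      (univ : Finset (Fin n)).offDiag (fun p hp => (mem_offDiag.1 hp).2.2) P
      (fun i => (poolBound_mono _ hE).trans (hP i)) with
    ⟨A, B, hA, hB, hAB⟩ | ⟨P', hP'P, hP'r, hP'⟩
  · obtain ⟨A', hA'A, hA'⟩ := hG.exists_isNIndepSet hA
    obtain ⟨B', hB'B, hB'⟩ := hG.exists_isNIndepSet hB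
    exact .inl (nonempty_completeBipartiteGraph_embedding hA' hB' fun a ha b hb =>
      hAB a (hA'A ha) b (hB'B hb))
  choose L hLP' hL using fun i => hG.exists_isNIndepSet (hP'r i)
  choose l hlL using fun i => exists_fin_embedding_forall_mem (hL i).card_eq.ge
  refine .inr (nonempty_starForest_embedding hc (fun i => (l i).injective) hcc
    (fun i j k => hcP i j _ (hP'P j (hLP' j (hlL j k)))) fun i j k k' => ?_)
  obtain rfl | hij := eq_or_ne i j
  · exact (hL i).isIndepSet.not_adj_s19 (hlL i k) (hlL i k')
  · exact hP' (i, j) (by simp [hij]) _ (hLP' i (hlL i k)) _ (hLP' j (hlL j k'))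

theorem completeBipartite_or_starForest_of_centers [DecidableRel G.Adj] {n : ℕ}
    (hG : G.CliqueFree n) {C : Finset V} (hC : G.IsIndepSet C) (hCn : n * (2 * n + 1) ≤ #C)
    {P : V → Finset V} (hPadj : ∀ w ∈ C, ∀ y ∈ P w, G.Adj w y)
    (hP : ∀ w ∈ C, poolBound ((n + n).choose n) (n ^ 2) ≤ #(P w))
    (hPC : ∀ w ∈ C, #{x ∈ C | ∃ y ∈ P w, G.Adj x y} ≤ n) :
    Nonempty (completeBipartiteGraph (Fin n) (Fin n) ↪g G) ∨ Nonempty (starForest n ↪g G) := by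
  classical
  obtain ⟨T, hTC, hT, hsep⟩ := exists_subset_card_eq_forall_notMem _ n n C hPC hCn
  obtain ⟨c, hcT⟩ := exists_fin_embedding_forall_mem hT.ge
  have hcC : ∀ i, c i ∈ C := fun i => hTC (hcT i)
  refine completeBipartite_or_starForest_of_pools hG c.injective
    (fun i j => hC.not_adj_s19 (hcC i) (hcC j)) (P := fun i => P (c i))
    (fun i => hP _ (hcC i)) fun i j y hy => ?_
  obtain rfl | hij := eq_or_ne i j
  · simpa using hPadj _ (hcC i) y hy
  · have hout := hsep (c j) (hcT j) (c i) (hcT i) (c.injective.ne hij.symm)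
    simp only [hij, iff_false]
    exact fun h => hout (mem_filter.2 ⟨hcC i, y, hy, h⟩)

theorem completeBipartite_or_starForest_of_cliqueFree [Fintype V] [DecidableRel G.Adj] {n : ℕ}
    (hG : G.CliqueFree n) {H : Finset V} (hH : hIndexThreshold n ≤ #H)
    (hdeg : ∀ v ∈ H, hIndexThreshold n ≤ G.degree v) :
    Nonempty (completeBipartiteGraph (Fin n) (Fin n) ↪g G) ∨ Nonempty (starForest n ↪g G) := by
  set r := (n + n).choose n
  set N := n * (2 * n + 1)
  set S := poolBound r (n ^ 2)
  have hthr : hIndexThreshold n = (n + N).choose n + N.choose n * r + 2 ^ N * S := rfl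
  obtain ⟨C, hCH, hC⟩ := hG.exists_isNIndepSet (s := H) (b := N) (by omega)
  by_cases hcommon : ∃ T ⊆ C, #T = n ∧ ∃ U : Finset V, r ≤ #U ∧ ∀ x ∈ T, ∀ y ∈ U, G.Adj x y
  · obtain ⟨T, hTC, hT, U, hU, hTU⟩ := hcommon
    obtain ⟨B, hBU, hB⟩ := hG.exists_isNIndepSet hU
    exact .inl (nonempty_completeBipartiteGraph_embedding
      ⟨Set.Pairwise.mono (coe_subset.2 hTC) hC.isIndepSet, hT⟩ hB
      fun a ha b hb => hTU a ha b (hBU hb))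
  have hbusy := card_filter_le_choose_mul G.Adj C fun T hTC hT U hTU =>
    Nat.le_of_lt (not_le.1 fun hU => hcommon ⟨T, hTC, hT, U, hU, hTU⟩)
  rw [hC.card_eq] at hbusy
  have hquiet : ∀ w ∈ C,
      2 ^ #C * S ≤ #{y ∈ G.neighborFinset w | #{x ∈ C | G.Adj x y} < n} := by
    intro w hw
    have hsplit := card_filter_add_card_filter_not (s := G.neighborFinset w)
      fun y => #{x ∈ C | G.Adj x y} < n
    have hbusy' : #{y ∈ G.neighborFinset w | ¬#{x ∈ C | G.Adj x y} < n} ≤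
        #{y | n ≤ #{x ∈ C | G.Adj x y}} :=
      card_le_card fun y hy => mem_filter.2 ⟨mem_univ _, not_lt.1 (mem_filter.1 hy).2⟩
    have hw := hdeg w (hCH hw)
    rw [← card_neighborFinset_eq_degree] at hw
    rw [hC.card_eq]
    omega
  choose! P hPD hPS hPC using fun w hw =>
    exists_subset_card_filter_exists_le G.Adj C (fun y hy => (mem_filter.1 hy).2) (hquiet w hw)
  exact completeBipartite_or_starForest_of_centers hG hC.isIndepSet hC.card_eq.ge
    (fun w hw y hy => (mem_neighborFinset _ _ _).1 (mem_filter.1 (hPD w hw hy)).1) hPS hPC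

end SimpleGraph

theorem statement19_general (n : ℕ) :
    ∃ d : ℕ, ∀ (V : Type) [Fintype V] (G : SimpleGraph V),
      d ≤ {v : V | d ≤ (G.neighborSet v).ncard}.ncard →
      (Nonempty ((⊤ : SimpleGraph (Fin n)) ↪g G) ∨
        Nonempty (completeBipartiteGraph (Fin n) (Fin n) ↪g G) ∨
        Nonempty (starForest n ↪g G)) := by
  refine ⟨hIndexThreshold n, fun V _ G hV => ?_⟩
  classical
  by_cases hG : G.CliqueFree n
  · refine .inr (completeBipartite_or_starForest_of_cliqueFree hG
      (H := {v | hIndexThreshold n ≤ G.degree v}) ?_ fun v hv => (mem_filter.1 hv).2)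
    convert hV using 1
    rw [← Set.ncard_coe_finset]
    congr 1
    ext v
    simp [Set.ncard_eq_toFinset_card', ← card_neighborFinset_eq_degree, neighborFinset_def]
  · exact .inl ⟨topEmbeddingOfNotCliqueFree hG⟩

/-- For every `n ≥ 1` there is `d` such that every graph with at least `d` vertices of
degree at least `d` (i.e. of h-index at least `d`) contains a clique of size `n`, an
induced `K_{n,n}`, or an induced `nK_{1,n}`. -/
theorem statement19 (n : ℕ) (hn : 1 ≤ n) :
    ∃ d : ℕ, ∀ (V : Type) [Fintype V] (G : SimpleGraph V),
      d ≤ {v : V | d ≤ (G.neighborSet v).ncard}.ncard →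
      (Nonempty ((⊤ : SimpleGraph (Fin n)) ↪g G) ∨
        Nonempty (completeBipartiteGraph (Fin n) (Fin n) ↪g G) ∨
        Nonempty (starForest n ↪g G)) :=
  statement19_general n
end
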